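/- arXiv:2602.04134 — 3 statements merged into one kernel-verified Lean document; each statement's English description precedes it below -/
import Mathlib

section
/- For every bounded linear operator A on a complex Hilbert space, w(A)² ≤ (1/4)‖ A*A + AA* ‖ + (1/2) w(|A| · |A*|), where |A| = (A*A)^{1/2} and |A*| = (AA*)^{1/2}. -/
/-!
Write `P = |A|`, `Q = |A*|`. For a unit vector `x`, Kato's mixed Schwarz inequality gives
`|⟪Ax, x⟫|² ≤ ⟪Px, x⟫⟪Qx, x⟫ = |⟪Qx, x⟫⟪x, Px⟫|`; Buzano's inequality bounds this by
`(‖Qx‖‖Px‖ + |⟪PQx, x⟫|) / 2`, and `‖Px‖‖Qx‖ ≤ (‖Px‖² + ‖Qx‖²) / 2 = ⟪(A*A + AA*)x, x⟫ / 2`.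

The mixed Schwarz inequality is proved without a polar decomposition. Uniqueness of positive
square roots gives `A P A* = Q³`, hence `(AP - QA)(AP - QA)* = 0`, i.e. `AP = QA`. For `x = Pz`
this turns `⟪Ax, y⟫` into `⟪Q(Az), y⟫`, to which the Cauchy–Schwarz inequality for the form of
`Q` applies. The inequality then extends by continuity to the closure of the range of `P`, and
trivially to its orthogonal complement `ker P = ker A`.
-/

open ContinuousLinearMap

/-- The numerical radius of a bounded operator. -/
noncomputable def numRad {H : Type*} [NormedAddCommGroup H] [InnerProductSpace ℂ H]
    (A : H →L[ℂ] H) : ℝ :=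
  sSup {r : ℝ | ∃ x : H, ‖x‖ = 1 ∧ r = ‖(inner ℂ (A x) x : ℂ)‖}

open scoped InnerProductSpace

section Buzano

variable {𝕜 E : Type*} [RCLike 𝕜] [NormedAddCommGroup E] [InnerProductSpace 𝕜 E]

-- Buzano's inequality
theorem norm_inner_mul_inner_le_of_norm_eq_one (u v : E) {x : E} (hx : ‖x‖ = 1) :
    ‖⟪u, x⟫_𝕜 * ⟪x, v⟫_𝕜‖ ≤ (‖u‖ * ‖v‖ + ‖⟪u, v⟫_𝕜‖) / 2 := by
  set y := (𝕜 ∙ x).reflection u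
  have hy : ⟪y, v⟫_𝕜 = 2 * (⟪u, x⟫_𝕜 * ⟪x, v⟫_𝕜) - ⟪u, v⟫_𝕜 := by
    simp only [y, Submodule.reflection_singleton_apply, hx, two_smul, inner_sub_left,
      inner_add_left, inner_smul_left, inner_conj_symm, RCLike.ofReal_one, one_pow, div_one]
    ring
  have : ‖(2 : 𝕜) * (⟪u, x⟫_𝕜 * ⟪x, v⟫_𝕜)‖ ≤ ‖u‖ * ‖v‖ + ‖⟪u, v⟫_𝕜‖ :=
    calc _ = ‖⟪y, v⟫_𝕜 + ⟪u, v⟫_𝕜‖ := by rw [hy, sub_add_cancel]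
      _ ≤ ‖y‖ * ‖v‖ + ‖⟪u, v⟫_𝕜‖ := by grw [norm_add_le, norm_inner_le_norm]
      _ = ‖u‖ * ‖v‖ + ‖⟪u, v⟫_𝕜‖ := by rw [LinearIsometryEquiv.norm_map]
  rw [norm_mul, RCLike.norm_two] at this
  linarith

end Buzano

namespace ContinuousLinearMap

variable {H : Type*} [NormedAddCommGroup H] [InnerProductSpace ℂ H] [CompleteSpace H]

theorem IsPositive.norm_inner_sq_le {T : H →L[ℂ] H} (hT : T.IsPositive) (u v : H) :
    ‖⟪T u, v⟫_ℂ‖ ^ 2 ≤ RCLike.re ⟪T u, u⟫_ℂ * RCLike.re ⟪T v, v⟫_ℂ := by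
  set S := CFC.sqrt T
  have hS : IsSelfAdjoint S := .of_nonneg (CFC.sqrt_nonneg T)
  have hSS : ∀ w z, ⟪T w, z⟫_ℂ = ⟪S w, S z⟫_ℂ := fun w z => by
    rw [← CFC.sqrt_mul_sqrt_self T ((nonneg_iff_isPositive T).mpr hT), mul_apply_eq_comp,
      ← adjoint_inner_right, hS.adjoint_eq]
  simpa only [hSS, sq, ← norm_inner_symm (S u)] using inner_mul_inner_self_le (S u) (S v)

variable {A P Q : H →L[ℂ] H}

theorem mul_eq_mul_of_mul_self_eq (hP : P.IsPositive) (hQ : Q.IsPositive)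
    (hP2 : P * P = adjoint A * A) (hQ2 : Q * Q = A * adjoint A) : A * P = Q * A := by
  have hAPA : 0 ≤ A * P * adjoint A := (nonneg_iff_isPositive _).mpr (hP.conj_adjoint A)
  have hQQQ : 0 ≤ Q * (Q * Q) := by
    have := hQ.conj_adjoint Q
    rw [hQ.isSelfAdjoint.adjoint_eq] at this
    exact (nonneg_iff_isPositive _).mpr this
  have hcube : A * P * adjoint A = Q * (Q * Q) := by
    rw [← CFC.mul_self_eq_mul_self_iff (A * P * adjoint A) (Q * (Q * Q))]
    calc A * P * adjoint A * (A * P * adjoint A) = A * P * (adjoint A * A) * P * adjoint A := by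
          noncomm_ring
      _ = A * (P * P) * (P * P) * adjoint A := by rw [← hP2]; noncomm_ring
      _ = (A * adjoint A) * (A * adjoint A) * (A * adjoint A) := by rw [hP2]; noncomm_ring
      _ = Q * (Q * Q) * (Q * (Q * Q)) := by rw [← hQ2]; noncomm_ring
  rw [← sub_eq_zero, ← CStarRing.mul_star_self_eq_zero_iff]
  calc (A * P - Q * A) * star (A * P - Q * A)
      = A * (P * P) * adjoint A - A * P * adjoint A * Q - Q * (A * P * adjoint A)
        + Q * (A * adjoint A) * Q := by
        rw [star_sub, star_mul, star_mul, hP.isSelfAdjoint.star_eq, hQ.isSelfAdjoint.star_eq,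
          star_eq_adjoint]
        noncomm_ring
    _ = 0 := by
        have hquartic : A * (P * P) * adjoint A = Q * Q * (Q * Q) := by
          rw [hP2, hQ2]; noncomm_ring
        rw [hquartic, hcube, ← hQ2]
        noncomm_ring

theorem norm_apply_sq_add_norm_apply_sq_le (hP : IsSelfAdjoint P) (hQ : IsSelfAdjoint Q)
    (hP2 : P * P = adjoint A * A) (hQ2 : Q * Q = A * adjoint A) {x : H} (hx : ‖x‖ = 1) :
    ‖P x‖ ^ 2 + ‖Q x‖ ^ 2 ≤ ‖adjoint A * A + A * adjoint A‖ := by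
  set T := adjoint A * A + A * adjoint A
  have hsq : ∀ S : H →L[ℂ] H, IsSelfAdjoint S → ‖S x‖ ^ 2 = RCLike.re ⟪(S * S) x, x⟫_ℂ :=
    fun S hS => by rw [apply_norm_sq_eq_inner_adjoint_left, hS.adjoint_eq]; rfl
  calc ‖P x‖ ^ 2 + ‖Q x‖ ^ 2 = RCLike.re ⟪T x, x⟫_ℂ := by
        rw [hsq P hP, hsq Q hQ, hP2, hQ2, add_apply, inner_add_left, map_add]
    _ ≤ ‖⟪T x, x⟫_ℂ‖ := RCLike.re_le_norm _
    _ ≤ ‖T x‖ * ‖x‖ := norm_inner_le_norm _ _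
    _ ≤ ‖T‖ := by simpa [hx] using T.le_opNorm x

theorem norm_inner_apply_apply_sq_le (hP : P.IsPositive) (hQ : Q.IsPositive)
    (hP2 : P * P = adjoint A * A) (hQ2 : Q * Q = A * adjoint A) (z y : H) :
    ‖⟪A (P z), y⟫_ℂ‖ ^ 2 ≤ RCLike.re ⟪P (P z), P z⟫_ℂ * RCLike.re ⟪Q y, y⟫_ℂ := by
  have hAP : A (P z) = Q (A z) := by
    rw [← mul_apply_eq_comp, mul_eq_mul_of_mul_self_eq hP hQ hP2 hQ2, mul_apply_eq_comp]
  have hQA : ⟪Q (A z), A z⟫_ℂ = ⟪P (P z), P z⟫_ℂ := by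
    rw [← hAP, ← adjoint_inner_right, ← mul_apply_eq_comp (adjoint A), ← hP2, mul_apply_eq_comp,
      ← hP.inner_left_eq_inner_right]
  simpa only [hAP, hQA] using hQ.norm_inner_sq_le (A z) y

theorem norm_inner_apply_sq_le_of_mem_closure_range (hP : P.IsPositive) (hQ : Q.IsPositive)
    (hP2 : P * P = adjoint A * A) (hQ2 : Q * Q = A * adjoint A) {x : H}
    (hx : x ∈ closure (Set.range P)) (y : H) :
    ‖⟪A x, y⟫_ℂ‖ ^ 2 ≤ RCLike.re ⟪P x, x⟫_ℂ * RCLike.re ⟪Q y, y⟫_ℂ := by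
  have hclosed : IsClosed {w | ‖⟪A w, y⟫_ℂ‖ ^ 2 ≤ RCLike.re ⟪P w, w⟫_ℂ * RCLike.re ⟪Q y, y⟫_ℂ} :=
    isClosed_le (by fun_prop) (by fun_prop)
  refine closure_minimal ?_ hclosed hx
  rintro _ ⟨z, rfl⟩
  exact norm_inner_apply_apply_sq_le hP hQ hP2 hQ2 z y

theorem norm_inner_sq_le_re_inner_mul_re_inner (hP : P.IsPositive) (hQ : Q.IsPositive)
    (hP2 : P * P = adjoint A * A) (hQ2 : Q * Q = A * adjoint A) (x y : H) :
    ‖⟪A x, y⟫_ℂ‖ ^ 2 ≤ RCLike.re ⟪P x, x⟫_ℂ * RCLike.re ⟪Q y, y⟫_ℂ := by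
  obtain ⟨x₀, hx₀, x₁, hx₁, rfl⟩ := P.ker.exists_add_mem_mem_orthogonal x
  have hPx₀ : P x₀ = 0 := hx₀
  have hAx₀ : A x₀ = 0 := by
    have h : x₀ ∈ (adjoint A ∘L A).ker := show (adjoint A * A) x₀ = 0 by
      rw [← hP2, mul_apply_eq_comp, hPx₀, map_zero]
    rwa [ker_adjoint_comp_self] at h
  rw [P.orthogonal_ker, hP.isSelfAdjoint.adjoint_eq, ← SetLike.mem_coe,
    Submodule.topologicalClosure_coe] at hx₁
  have hPx : ⟪P (x₀ + x₁), x₀ + x₁⟫_ℂ = ⟪P x₁, x₁⟫_ℂ := by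
    rw [map_add, hPx₀, zero_add, inner_add_right, hP.inner_left_eq_inner_right, hPx₀,
      inner_zero_right, zero_add]
  rw [map_add, hAx₀, zero_add, hPx]
  exact norm_inner_apply_sq_le_of_mem_closure_range hP hQ hP2 hQ2 hx₁ y

end ContinuousLinearMap

section NumericalRadius

variable {H : Type*} [NormedAddCommGroup H] [InnerProductSpace ℂ H]

theorem numRad_nonneg (T : H →L[ℂ] H) : 0 ≤ numRad T :=
  Real.sSup_nonneg <| by rintro _ ⟨x, -, rfl⟩; exact norm_nonneg _

theorem norm_inner_le_numRad (T : H →L[ℂ] H) {x : H} (hx : ‖x‖ = 1) :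
    ‖⟪T x, x⟫_ℂ‖ ≤ numRad T := by
  refine le_csSup ⟨‖T‖, ?_⟩ ⟨x, hx, rfl⟩
  rintro _ ⟨y, hy, rfl⟩
  calc ‖⟪T y, y⟫_ℂ‖ ≤ ‖T y‖ * ‖y‖ := norm_inner_le_norm _ _
    _ ≤ ‖T‖ := by simpa [hy] using T.le_opNorm y

theorem numRad_sq_le_of_forall {T : H →L[ℂ] H} {c : ℝ} (hc : 0 ≤ c)
    (h : ∀ x : H, ‖x‖ = 1 → ‖⟪T x, x⟫_ℂ‖ ^ 2 ≤ c) : numRad T ^ 2 ≤ c := by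
  refine (Real.le_sqrt (numRad_nonneg T) hc).mp <| Real.sSup_le ?_ (Real.sqrt_nonneg c)
  rintro _ ⟨x, hx, rfl⟩
  exact Real.le_sqrt_of_sq_le (h x hx)

end NumericalRadius

theorem numRad_sq_le_with_geomean {H : Type*} [NormedAddCommGroup H] [InnerProductSpace ℂ H]
    [CompleteSpace H] (A P Q : H →L[ℂ] H)
    (hP : P.IsPositive) (hP2 : P * P = adjoint A * A)
    (hQ : Q.IsPositive) (hQ2 : Q * Q = A * adjoint A) :
    numRad A ^ 2 ≤ (1 / 4) * ‖adjoint A * A + A * adjoint A‖ + (1 / 2) * numRad (P * Q) := by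
  have hK : 0 ≤ (1 / 4) * ‖adjoint A * A + A * adjoint A‖ + (1 / 2) * numRad (P * Q) := by
    have := numRad_nonneg (P * Q); positivity
  refine numRad_sq_le_of_forall hK fun x hx => ?_
  have hsum := norm_apply_sq_add_norm_apply_sq_le hP.isSelfAdjoint hQ.isSelfAdjoint hP2 hQ2 hx
  have hPQ : ‖⟪Q x, P x⟫_ℂ‖ ≤ numRad (P * Q) := by
    rw [← hP.inner_left_eq_inner_right, ← mul_apply_eq_comp]
    exact norm_inner_le_numRad _ hx
  calc ‖⟪A x, x⟫_ℂ‖ ^ 2 ≤ RCLike.re ⟪P x, x⟫_ℂ * RCLike.re ⟪Q x, x⟫_ℂ :=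
        norm_inner_sq_le_re_inner_mul_re_inner hP hQ hP2 hQ2 x x
    _ ≤ ‖⟪Q x, x⟫_ℂ * ⟪x, P x⟫_ℂ‖ := by
        rw [norm_mul, norm_inner_symm x, mul_comm]
        gcongr
        exacts [hP.re_inner_nonneg_left x, RCLike.re_le_norm _, RCLike.re_le_norm _]
    _ ≤ (‖Q x‖ * ‖P x‖ + ‖⟪Q x, P x⟫_ℂ‖) / 2 := norm_inner_mul_inner_le_of_norm_eq_one _ _ hx
    _ ≤ _ := by nlinarith [sq_nonneg (‖P x‖ - ‖Q x‖)]
end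

section
/- Let A be a bounded linear operator on a complex Hilbert space with A² = 0. Then w(A) = (1/2)‖A‖. -/
open ContinuousLinearMap

/-!
Polarization bounds `‖⟪A x, y⟫‖` by `w(A) (‖x‖² + ‖y‖²)`; testing it against `y` a multiple of
`A x` with `‖y‖ = ‖x‖` gives `‖A‖ ≤ 2 w(A)` for every operator.

Conversely, if `A (A x) = 0`, split `x = k + m` orthogonally with `k` on the line through `A x`,
which `A` annihilates. Then `A x = A m` and `A x ⊥ m`, so `⟪A x, x⟫ = ⟪A m, k⟫`, whose modulus is
at most `‖A‖ ‖m‖ ‖k‖ ≤ ‖A‖ (‖k‖² + ‖m‖²) / 2 = ‖A‖ ‖x‖² / 2`.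
-/

section

variable {H : Type*} [NormedAddCommGroup H] [InnerProductSpace ℂ H] (A : H →L[ℂ] H)

theorem norm_inner_apply_self_le_numRad {x : H} (hx : ‖x‖ = 1) :
    ‖inner ℂ (A x) x‖ ≤ numRad A := by
  refine le_csSup ⟨‖A‖, ?_⟩ ⟨x, hx, rfl⟩
  rintro r ⟨y, hy, rfl⟩
  simpa [hy] using (norm_inner_le_norm (A y) y).trans
    (mul_le_mul_of_nonneg_right (A.le_opNorm y) (norm_nonneg y))

theorem numRad_le {c : ℝ} (hc : 0 ≤ c) (h : ∀ x : H, ‖x‖ = 1 → ‖inner ℂ (A x) x‖ ≤ c) :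
    numRad A ≤ c :=
  Real.sSup_le (by rintro r ⟨x, hx, rfl⟩; exact h x hx) hc

theorem numRad_nonneg_s15 : 0 ≤ numRad A :=
  Real.sSup_nonneg (by rintro r ⟨x, -, rfl⟩; positivity)

theorem norm_inner_apply_self_le_numRad_mul_sq (x : H) :
    ‖inner ℂ (A x) x‖ ≤ numRad A * ‖x‖ ^ 2 := by
  rcases eq_or_ne x 0 with rfl | hx
  · simp
  set u : H := (‖x‖ : ℂ)⁻¹ • x
  have hxu : x = (‖x‖ : ℂ) • u := by
    have : (‖x‖ : ℂ) ≠ 0 := by exact_mod_cast norm_ne_zero_iff.mpr hx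
    simp [u, smul_smul, mul_inv_cancel₀ this]
  have hu : ‖u‖ = 1 := norm_smul_inv_norm hx
  calc ‖inner ℂ (A x) x‖ = ‖x‖ ^ 2 * ‖inner ℂ (A u) u‖ := by
        rw [hxu, map_smul, inner_smul_left, inner_smul_right, norm_mul, norm_mul,
          RCLike.norm_conj, Complex.norm_real, norm_norm, ← hxu]
        ring
    _ ≤ ‖x‖ ^ 2 * numRad A := by gcongr; exact norm_inner_apply_self_le_numRad A hu
    _ = numRad A * ‖x‖ ^ 2 := mul_comm _ _

theorem norm_inner_apply_le_numRad_mul (x y : H) :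
    ‖inner ℂ (A x) y‖ ≤ numRad A * (‖x‖ ^ 2 + ‖y‖ ^ 2) := by
  have hw := norm_inner_apply_self_le_numRad_mul_sq A
  have hpol := inner_map_polarization' (A : H →ₗ[ℂ] H) x y
  simp only [coe_coe] at hpol
  have hpar (z : H) : ‖x + z‖ ^ 2 + ‖x - z‖ ^ 2 = 2 * (‖x‖ ^ 2 + ‖z‖ ^ 2) := by
    have := parallelogram_law_with_norm ℂ x z
    nlinarith
  have hIy : ‖Complex.I • y‖ = ‖y‖ := by simp [norm_smul]
  calc ‖inner ℂ (A x) y‖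
      ≤ (‖inner ℂ (A (x + y)) (x + y)‖ + ‖inner ℂ (A (x - y)) (x - y)‖
          + ‖inner ℂ (A (x + Complex.I • y)) (x + Complex.I • y)‖
          + ‖inner ℂ (A (x - Complex.I • y)) (x - Complex.I • y)‖) / 4 := by
        rw [hpol, norm_div, Complex.norm_ofNat]
        gcongr
        have hI (z : ℂ) : ‖Complex.I * z‖ = ‖z‖ := by simp
        exact (norm_add_le _ _).trans (add_le_add ((norm_sub_le _ _).trans
          (add_le_add (norm_sub_le _ _) (hI _).le)) (hI _).le)
    _ ≤ numRad A * ((‖x + y‖ ^ 2 + ‖x - y‖ ^ 2)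
          + (‖x + Complex.I • y‖ ^ 2 + ‖x - Complex.I • y‖ ^ 2)) / 4 := by
        gcongr ?_ / 4
        linarith [hw (x + y), hw (x - y), hw (x + Complex.I • y), hw (x - Complex.I • y)]
    _ = numRad A * (‖x‖ ^ 2 + ‖y‖ ^ 2) := by
        rw [hpar, hpar, hIy]; ring

theorem norm_le_two_mul_numRad : ‖A‖ ≤ 2 * numRad A := by
  have hw := numRad_nonneg_s15 A
  refine A.opNorm_le_bound (by positivity) fun x ↦ ?_
  rcases eq_or_ne (A x) 0 with hAx | hAx
  · rw [hAx, norm_zero]; positivity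
  have hx : x ≠ 0 := by rintro rfl; simp at hAx
  have hAx' : 0 < ‖A x‖ := norm_pos_iff.mpr hAx
  have hx' : 0 < ‖x‖ := norm_pos_iff.mpr hx
  set y : H := ((‖x‖ / ‖A x‖ : ℝ) : ℂ) • A x
  have hy : ‖y‖ = ‖x‖ := by
    rw [norm_smul, Complex.norm_real, Real.norm_of_nonneg (by positivity)]
    field_simp
  have hAxy : ‖inner ℂ (A x) y‖ = ‖A x‖ * ‖x‖ := by
    rw [inner_smul_right, inner_self_eq_norm_sq_to_K, norm_mul, Complex.norm_real,
      Real.norm_of_nonneg (by positivity), norm_pow, RCLike.norm_ofReal, abs_norm]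
    field_simp
  have := norm_inner_apply_le_numRad_mul A x y
  rw [hAxy, hy] at this
  nlinarith

theorem norm_inner_apply_self_le_of_apply_apply_eq_zero {x : H} (h : A (A x) = 0) :
    ‖inner ℂ (A x) x‖ ≤ ‖A‖ / 2 * ‖x‖ ^ 2 := by
  set K := ℂ ∙ A x
  set k := K.starProjection x
  set m := Kᗮ.starProjection x
  have hkm : k + m = x := K.starProjection_add_starProjection_orthogonal x
  have hAk : A k = 0 := by
    obtain ⟨a, ha⟩ : ∃ a : ℂ, a • A x = k :=
      Submodule.mem_span_singleton.mp (K.starProjection_apply_mem x)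
    rw [← ha, map_smul, h, smul_zero]
  have hAm : A m = A x := by rw [← hkm, map_add, hAk, zero_add]
  have hAxm : inner ℂ (A x) m = 0 :=
    K.inner_right_of_mem_orthogonal (Submodule.mem_span_singleton_self _)
      (Kᗮ.starProjection_apply_mem x)
  calc ‖inner ℂ (A x) x‖ = ‖inner ℂ (A m) k‖ := by
        rw [← hkm, inner_add_right, hkm, hAxm, add_zero, hAm]
    _ ≤ ‖A‖ * ‖m‖ * ‖k‖ := (norm_inner_le_norm _ _).trans (by gcongr; exact A.le_opNorm m)
    _ ≤ ‖A‖ / 2 * (‖k‖ ^ 2 + ‖m‖ ^ 2) := by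
        nlinarith [two_mul_le_add_sq ‖k‖ ‖m‖, norm_nonneg A]
    _ = ‖A‖ / 2 * ‖x‖ ^ 2 := by rw [← Submodule.norm_sq_eq_add_norm_sq_starProjection x K]

theorem numRad_le_half_norm_of_mul_self_eq_zero (hA : A * A = 0) : numRad A ≤ ‖A‖ / 2 :=
  numRad_le A (by positivity) fun x hx ↦ by
    simpa [hx] using norm_inner_apply_self_le_of_apply_apply_eq_zero A (x := x)
      (show (A * A) x = 0 by rw [hA, zero_apply])

end

theorem numRad_of_sq_zero_general {H : Type*} [NormedAddCommGroup H] [InnerProductSpace ℂ H]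
    (A : H →L[ℂ] H) (hA : A * A = 0) :
    numRad A = (1 / 2) * ‖A‖ := by
  linarith [norm_le_two_mul_numRad A, numRad_le_half_norm_of_mul_self_eq_zero A hA]

theorem numRad_of_sq_zero {H : Type*} [NormedAddCommGroup H] [InnerProductSpace ℂ H]
    [CompleteSpace H] (A : H →L[ℂ] H) (hA : A * A = 0) :
    numRad A = (1 / 2) * ‖A‖ :=
  numRad_of_sq_zero_general A hA
end

section
/- For positive bounded operators P, Q on a complex Hilbert space and every unit vector x, ⟨Px, x⟩ · ⟨Qx, x⟩ ≤ (1/4)⟨(P² + Q²)x, x⟩ + (1/2)|⟨Qx, Px⟩|. -/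
open ContinuousLinearMap

/-!
Since `⟪Px, x⟫` and `⟪Qx, x⟫` have nonnegative real parts, their product is at most
`|⟪Px, x⟫ ⟪x, Qx⟫|`. Buzano's inequality bounds this by `(‖Px‖ ‖Qx‖ + |⟪Qx, Px⟫|) / 2`, and
AM–GM bounds `‖Px‖ ‖Qx‖` by `(‖Px‖² + ‖Qx‖²) / 2 = re ⟪(P² + Q²) x, x⟫ / 2`.
-/

section

variable {𝕜 E : Type*} [RCLike 𝕜] [NormedAddCommGroup E] [InnerProductSpace 𝕜 E]

open scoped InnerProductSpace

/-- Buzano's inequality. The vector `2⟪x, a⟫ x - a` is the reflection of `a` in the line through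
`x`, so it has the norm of `a`; Cauchy–Schwarz for it and `b` is the inequality. -/
theorem two_mul_norm_inner_mul_inner_le {x : E} (hx : ‖x‖ = 1) (a b : E) :
    2 * ‖⟪a, x⟫_𝕜 * ⟪x, b⟫_𝕜‖ ≤ ‖a‖ * ‖b‖ + ‖⟪a, b⟫_𝕜‖ := by
  set r := (𝕜 ∙ x).reflection a
  have hr : ⟪r, b⟫_𝕜 = 2 * (⟪a, x⟫_𝕜 * ⟪x, b⟫_𝕜) - ⟪a, b⟫_𝕜 := by
    simp only [r, Submodule.reflection_apply, Submodule.starProjection_unit_singleton 𝕜 hx,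
      two_smul, inner_sub_left, inner_add_left, inner_smul_left, inner_conj_symm]
    ring
  calc 2 * ‖⟪a, x⟫_𝕜 * ⟪x, b⟫_𝕜‖ = ‖⟪r, b⟫_𝕜 + ⟪a, b⟫_𝕜‖ := by
        rw [hr, sub_add_cancel, norm_mul (2 : 𝕜), RCLike.norm_two]
    _ ≤ ‖r‖ * ‖b‖ + ‖⟪a, b⟫_𝕜‖ := (norm_add_le _ _).trans (by gcongr; exact norm_inner_le_norm r b)
    _ = ‖a‖ * ‖b‖ + ‖⟪a, b⟫_𝕜‖ := by rw [LinearIsometryEquiv.norm_map]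

theorem LinearMap.IsSymmetric.re_inner_mul_self_apply {T : E →L[𝕜] E}
    (hT : (T : E →ₗ[𝕜] E).IsSymmetric) (x : E) :
    RCLike.re ⟪(T * T) x, x⟫_𝕜 = ‖T x‖ ^ 2 := by
  rw [← inner_self_eq_norm_sq (𝕜 := 𝕜)]
  exact congrArg _ (hT (T x) x)

end

theorem positive_amgm_buzano_general {H : Type*} [NormedAddCommGroup H] [InnerProductSpace ℂ H]
    (P Q : H →L[ℂ] H) (hP : P.IsPositive) (hQ : Q.IsPositive)
    (x : H) (hx : ‖x‖ = 1) :
    (inner ℂ (P x) x : ℂ).re * (inner ℂ (Q x) x : ℂ).re ≤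
      (1 / 4) * (inner ℂ ((P * P + Q * Q) x) x : ℂ).re +
        (1 / 2) * ‖(inner ℂ (Q x) (P x) : ℂ)‖ := by
  have buzano := two_mul_norm_inner_mul_inner_le (𝕜 := ℂ) hx (P x) (Q x)
  rw [norm_mul, norm_inner_symm (P x) (Q x)] at buzano
  have amgm := two_mul_le_add_sq ‖P x‖ ‖Q x‖
  have hPP : (inner ℂ ((P * P) x) x).re = ‖P x‖ ^ 2 := hP.isSymmetric.re_inner_mul_self_apply x
  have hQQ : (inner ℂ ((Q * Q) x) x).re = ‖Q x‖ ^ 2 := hQ.isSymmetric.re_inner_mul_self_apply x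
  calc (inner ℂ (P x) x).re * (inner ℂ (Q x) x).re
      ≤ ‖inner ℂ (P x) x‖ * ‖inner ℂ x (Q x)‖ := by
        rw [norm_inner_symm x]
        exact mul_le_mul (Complex.re_le_norm _) (Complex.re_le_norm _)
          (hQ.re_inner_nonneg_left x) (norm_nonneg _)
    _ ≤ (1 / 4) * (‖P x‖ ^ 2 + ‖Q x‖ ^ 2) + (1 / 2) * ‖inner ℂ (Q x) (P x)‖ := by linarith
    _ = _ := by rw [add_apply, inner_add_left, Complex.add_re, hPP, hQQ]

theorem positive_amgm_buzano {H : Type*} [NormedAddCommGroup H] [InnerProductSpace ℂ H]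
    [CompleteSpace H] (P Q : H →L[ℂ] H) (hP : P.IsPositive) (hQ : Q.IsPositive)
    (x : H) (hx : ‖x‖ = 1) :
    (inner ℂ (P x) x : ℂ).re * (inner ℂ (Q x) x : ℂ).re ≤
      (1 / 4) * (inner ℂ ((P * P + Q * Q) x) x : ℂ).re +
        (1 / 2) * ‖(inner ℂ (Q x) (P x) : ℂ)‖ :=
  positive_amgm_buzano_general P Q hP hQ x hx
end
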